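/- For integer n ≥ 1 the derivative of ζ_ℤ at −n equals binom(2n,n) · ( H_n − 2·(1 + 1/3 + ⋯ + 1/(2n−1)) ), where H_n = 1 + 1/2 + ⋯ + 1/n is the n-th harmonic number. -/

import Mathlib

open Complex Finset

/-- The (meromorphically continued) spectral zeta function of the graph ℤ. -/
noncomputable def zetaZ (s : ℂ) : ℂ :=
  (4 : ℂ) ^ (-s) * ((Real.sqrt Real.pi : ℂ))⁻¹ *
    Complex.Gamma (1 / 2 - s) / Complex.Gamma (1 - s)

/-!
At `s = -n` all Gamma factors of `ζ_ℤ` are regular and nonzero, so `ζ_ℤ'(-n) = ζ_ℤ(-n) · (log ζ_ℤ)'(-n)`.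
The duplication formula gives `ζ_ℤ(-n) = binom(2n, n)`, and the logarithmic derivative is
`ψ(1 + n) - ψ(1/2 + n) - log 4` with `ψ` the digamma function. The recurrence `ψ(s + 1) = ψ(s) + 1/s`
reduces this to `ψ(1) - ψ(1/2) - log 4 + H_n - 2 (1 + 1/3 + ⋯ + 1/(2n - 1))`, and
`ψ(1) - ψ(1/2) = 2 log 2 = log 4`.
-/

open scoped Nat

namespace Complex

lemma ne_neg_natCast_of_re_pos {s : ℂ} (hs : 0 < s.re) (m : ℕ) : s ≠ -m := by
  rintro rfl
  simp only [neg_re, natCast_re, Left.neg_pos_iff] at hs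
  linarith [m.cast_nonneg (α := ℝ)]

lemma log_four : log 4 = 2 * log 2 := by
  rw [show (4 : ℂ) = ((2 ^ 2 : ℝ) : ℂ) by norm_num, ← ofReal_log (by norm_num), Real.log_pow,
    show (2 : ℂ) = ((2 : ℝ) : ℂ) by norm_num, ← ofReal_log (by norm_num)]
  push_cast
  ring

lemma Gamma_half_add_nat_mul_factorial_mul_four_pow (n : ℕ) :
    Gamma (1 / 2 + n) * n ! * 4 ^ n = (2 * n)! * √Real.pi := by
  have h := Gamma_mul_Gamma_add_half (1 / 2 + n)
  rw [show (1 / 2 + n : ℂ) + 1 / 2 = n + 1 by ring,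
    show 2 * (1 / 2 + n : ℂ) = (2 * n : ℕ) + 1 by push_cast; ring, Gamma_nat_eq_factorial,
    Gamma_nat_eq_factorial, sub_add_cancel_right, cpow_neg, cpow_natCast] at h
  rw [h, show (4 : ℂ) ^ n = 2 ^ (2 * n) by rw [pow_mul]; norm_num]
  field_simp

lemma digamma_add_nat {s : ℂ} (hs : ∀ m : ℕ, s ≠ -m) (n : ℕ) :
    digamma (s + n) = digamma s + ∑ k ∈ range n, (s + k)⁻¹ := by
  induction n with
  | zero => simp
  | succ n ih =>
    have hsn : ∀ m : ℕ, s + n ≠ -m := fun m h => hs (m + n) (by push_cast; linear_combination h)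
    rw [Nat.cast_succ, ← add_assoc, digamma_apply_add_one _ hsn, ih, sum_range_succ, add_assoc]

lemma digamma_one_add_nat_sub_digamma_half_add_nat (n : ℕ) :
    digamma (1 + n) - digamma (1 / 2 + n) =
      2 * log 2 + ((∑ k ∈ range n, (1 : ℂ) / (k + 1)) -
        2 * ∑ k ∈ range n, (1 : ℂ) / (2 * k + 1)) := by
  have h_one : ∑ k ∈ range n, (1 + (k : ℂ))⁻¹ = ∑ k ∈ range n, (1 : ℂ) / (k + 1) :=
    sum_congr rfl fun k _ => by rw [add_comm, one_div]
  have h_half :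
      ∑ k ∈ range n, (1 / 2 + (k : ℂ))⁻¹ = 2 * ∑ k ∈ range n, (1 : ℂ) / (2 * k + 1) := by
    rw [mul_sum]
    refine sum_congr rfl fun k _ => ?_
    rw [show (1 / 2 + k : ℂ) = (2 * k + 1) / 2 by ring, inv_div]
    ring
  rw [digamma_add_nat (ne_neg_natCast_of_re_pos (by simp)),
    digamma_add_nat (ne_neg_natCast_of_re_pos (by norm_num)), digamma_one, digamma_one_half,
    h_one, h_half]
  ring

lemma logDeriv_const_cpow_neg {c : ℂ} (hc : c ≠ 0) (s : ℂ) :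
    logDeriv (fun s => c ^ (-s)) s = -log c := by
  rw [logDeriv_apply, ((hasDerivAt_neg' s).const_cpow (.inl hc)).deriv]
  field_simp [cpow_ne_zero_iff.2 (.inl hc)]

lemma logDeriv_Gamma_const_sub {a s : ℂ} (h : ∀ m : ℕ, a - s ≠ -m) :
    logDeriv (fun s => Gamma (a - s)) s = -digamma (a - s) := by
  have hsub := (hasDerivAt_id s).const_sub a
  simpa [Function.comp_def, hsub.deriv, digamma_def] using
    logDeriv_comp (differentiableAt_Gamma _ h) hsub.differentiableAt

end Complex

lemma zetaZ_neg_natCast (n : ℕ) : zetaZ (-n) = (2 * n).choose n := by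
  have h_fact : ((2 * n).choose n * n ! * n ! : ℂ) = (2 * n)! := by
    have h := Nat.choose_mul_factorial_mul_factorial (Nat.le_mul_of_pos_left n two_pos)
    rw [show 2 * n - n = n by omega] at h
    exact_mod_cast h
  have hG := Gamma_half_add_nat_mul_factorial_mul_four_pow n
  unfold zetaZ
  rw [neg_neg, sub_neg_eq_add, sub_neg_eq_add, cpow_natCast, add_comm 1, Gamma_nat_eq_factorial]
  -- otherwise `field_simp` rewrites the argument `1 / 2 + n` and `hG` no longer matches
  generalize Gamma (1 / 2 + n) = G at hG ⊢
  have hfac : (n ! : ℂ) ≠ 0 := Nat.cast_ne_zero.2 n.factorial_ne_zero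
  field_simp
  refine mul_right_cancel₀ hfac ?_
  linear_combination hG - √Real.pi * h_fact

lemma logDeriv_zetaZ {s : ℂ} (h_half : ∀ m : ℕ, 1 / 2 - s ≠ -m) (h_one : ∀ m : ℕ, 1 - s ≠ -m) :
    logDeriv zetaZ s = digamma (1 - s) - digamma (1 / 2 - s) - log 4 := by
  have hGamma {a : ℂ} (h : ∀ m : ℕ, a - s ≠ -m) :
      DifferentiableAt ℂ (fun s => Gamma (a - s)) s :=
    (differentiableAt_Gamma _ h).comp s ((hasDerivAt_id s).const_sub a).differentiableAt
  have hexp : DifferentiableAt ℂ (fun s : ℂ => (4 : ℂ) ^ (-s) * (√Real.pi : ℂ)⁻¹) s :=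
    ((hasDerivAt_neg' s).const_cpow (.inl (by norm_num))).differentiableAt.mul_const _
  have hsqrt_inv_ne : (√Real.pi : ℂ)⁻¹ ≠ 0 := by simp [Real.pi_pos.le]
  have hexp_ne : (4 : ℂ) ^ (-s) * (√Real.pi : ℂ)⁻¹ ≠ 0 := by simp [Real.pi_pos.le]
  unfold zetaZ
  rw [logDeriv_div s, logDeriv_mul s, logDeriv_mul_const s, logDeriv_const_cpow_neg (by norm_num),
    logDeriv_Gamma_const_sub h_half, logDeriv_Gamma_const_sub h_one]
  · ring
  exacts [hsqrt_inv_ne, hexp_ne, Gamma_ne_zero h_half, hexp, hGamma h_half,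
    mul_ne_zero hexp_ne (Gamma_ne_zero h_half), Gamma_ne_zero h_one, hexp.mul (hGamma h_half),
    hGamma h_one]

theorem zetaZ_deriv_neg_int_general (n : ℕ) :
    deriv zetaZ (-(n : ℂ)) =
      (Nat.choose (2 * n) n : ℂ) *
        ((∑ i ∈ Finset.range n, (1 : ℂ) / (i + 1)) -
          2 * ∑ i ∈ Finset.range n, (1 : ℂ) / (2 * i + 1)) := by
  have h_regular (a : ℂ) (ha : 0 < a.re) : ∀ m : ℕ, a - -(n : ℂ) ≠ -m := by
    rw [sub_neg_eq_add]
    exact ne_neg_natCast_of_re_pos (by simp only [add_re, natCast_re]; positivity)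
  have h_value_ne : zetaZ (-n) ≠ 0 := by
    rw [zetaZ_neg_natCast]
    exact_mod_cast (Nat.choose_pos (by omega)).ne'
  have h_logDeriv := logDeriv_zetaZ (h_regular _ (by norm_num)) (h_regular _ (by norm_num))
  rw [logDeriv_apply, div_eq_iff h_value_ne, sub_neg_eq_add, sub_neg_eq_add,
    digamma_one_add_nat_sub_digamma_half_add_nat, log_four, zetaZ_neg_natCast] at h_logDeriv
  rw [h_logDeriv]
  ring

theorem zetaZ_deriv_neg_int (n : ℕ) (hn : 1 ≤ n) :
    deriv zetaZ (-(n : ℂ)) =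
      (Nat.choose (2 * n) n : ℂ) *
        ((∑ i ∈ Finset.range n, (1 : ℂ) / (i + 1)) -
          2 * ∑ i ∈ Finset.range n, (1 : ℂ) / (2 * i + 1)) :=
  zetaZ_deriv_neg_int_general n
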